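/- arXiv:1610.09300 — 5 statements merged into one kernel-verified Lean document; each statement's English description precedes it below -/
import Mathlib

section
/- Let V = ℝ^{K×n₁} × ℝ^{n₁×d} and let Φ : V → ℝ be differentiable. If the gradient ∇Φ(w,u) has strictly positive entries for every (w,u) ∈ S_+, then the global maximum of Φ on S_+ is attained at a point of S_{++}. -/
noncomputable section

open Real Filter Topology

/-- Parameter space of a one-hidden-layer network: pairs `(w, u)`. -/
abbrev PV (K n1 d : ℕ) : Type :=
  (Fin K → Fin n1 → ℝ) × (Fin n1 → Fin d → ℝ)

/-- Entrywise `p`-norm of a vector. -/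
def pnorm {ι : Type} [Fintype ι] (p : ℝ) (x : ι → ℝ) : ℝ :=
  (∑ i, |x i| ^ p) ^ (1 / p)

/-- Entrywise `p`-norm of a matrix. -/
def pnormM {ι κ : Type} [Fintype ι] [Fintype κ] (p : ℝ) (x : ι → κ → ℝ) : ℝ :=
  (∑ i, ∑ j, |x i j| ^ p) ^ (1 / p)

/-- Hölder conjugate `p' = p/(p-1)`. -/
def hconj (p : ℝ) : ℝ := p / (p - 1)

/-- `ψ_p(x) = sign(x) |x|^{p-1}`. -/
def psi (p x : ℝ) : ℝ := Real.sign x * |x| ^ (p - 1)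

/-- The constraint set `S₊`. -/
def Splus (K n1 d : ℕ) (pw pu ρw ρu : ℝ) : Set (PV K n1 d) :=
  {z | (∀ i j, 0 ≤ z.1 i j) ∧ (∀ a b, 0 ≤ z.2 a b) ∧
    (∀ i, pnorm pw (z.1 i) = ρw) ∧ pnormM pu z.2 = ρu}

/-- The constraint set `S₊₊` (strictly positive entries). -/
def Spp (K n1 d : ℕ) (pw pu ρw ρu : ℝ) : Set (PV K n1 d) :=
  {z | (∀ i j, 0 < z.1 i j) ∧ (∀ a b, 0 < z.2 a b) ∧
    (∀ i, pnorm pw (z.1 i) = ρw) ∧ pnormM pu z.2 = ρu}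

/-- The set `B₊₊` (strictly positive entries, norms at most `ρ`). -/
def Bpp (K n1 d : ℕ) (pw pu ρw ρu : ℝ) : Set (PV K n1 d) :=
  {z | (∀ i j, 0 < z.1 i j) ∧ (∀ a b, 0 < z.2 a b) ∧
    (∀ i, pnorm pw (z.1 i) ≤ ρw) ∧ pnormM pu z.2 ≤ ρu}

/-- Coordinate direction for the entry `w_{a,b}`. -/
def eW {K n1 d : ℕ} (a : Fin K) (b : Fin n1) : PV K n1 d :=
  ((fun i j => if i = a ∧ j = b then 1 else 0), 0)

/-- Coordinate direction for the entry `u_{a,b}`. -/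
def eU {K n1 d : ℕ} (a : Fin n1) (b : Fin d) : PV K n1 d :=
  (0, fun i j => if i = a ∧ j = b then 1 else 0)

/-- Partial derivative `∂Φ/∂w_{a,b}`. -/
def gradW {K n1 d : ℕ} (Φ : PV K n1 d → ℝ) (z : PV K n1 d) (a : Fin K) (b : Fin n1) : ℝ :=
  fderiv ℝ Φ z (eW a b)

/-- Partial derivative `∂Φ/∂u_{a,b}`. -/
def gradU {K n1 d : ℕ} (Φ : PV K n1 d → ℝ) (z : PV K n1 d) (a : Fin n1) (b : Fin d) : ℝ :=
  fderiv ℝ Φ z (eU a b)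

/-- The power-iteration map `G^Φ`. -/
def GPhi {K n1 d : ℕ} (pw pu ρw ρu : ℝ) (Φ : PV K n1 d → ℝ) (z : PV K n1 d) : PV K n1 d :=
  ((fun i j => ρw * psi (hconj pw) (gradW Φ z i j) /
      pnorm pw (fun j' => psi (hconj pw) (gradW Φ z i j'))),
    fun a b => ρu * psi (hconj pu) (gradU Φ z a b) /
      pnormM pu (fun a' b' => psi (hconj pu) (gradU Φ z a' b')))

/-- One-hidden-layer network `f_r(w,u)(x)`. -/
def net {K n1 d : ℕ} (α : Fin n1 → ℝ) (w : Fin K → Fin n1 → ℝ) (u : Fin n1 → Fin d → ℝ)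
    (x : Fin d → ℝ) (r : Fin K) : ℝ :=
  ∑ l, w r l * (∑ m, u l m * x m) ^ α l

/-- Cross-entropy loss. -/
def loss {K : ℕ} (y : Fin K) (g : Fin K → ℝ) : ℝ :=
  -g y + Real.log (∑ j, Real.exp (g j))

/-- The objective `Φ`. -/
def Phi {K n1 d n : ℕ} (α : Fin n1 → ℝ) (x : Fin n → Fin d → ℝ) (y : Fin n → Fin K)
    (ε : ℝ) (z : PV K n1 d) : ℝ :=
  (1 / (n : ℝ)) * ∑ i, (-loss (y i) (net α z.1 z.2 (x i)) + ∑ r, net α z.1 z.2 (x i) r)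
    + ε * ((∑ r, ∑ l, z.1 r l) + ∑ l, ∑ m, z.2 l m)

/-- Spectral radius of a real square matrix: maximum modulus of its (complex) eigenvalues. -/
def specRad {m : ℕ} (A : Matrix (Fin m) (Fin m) ℝ) : ℝ :=
  sSup {r : ℝ | ∃ μ : ℂ, μ ∈ spectrum ℂ (A.map Complex.ofReal) ∧ r = ‖μ‖}

/-- Maximum of `g` over `Fin n`, `n > 0`. -/
def finMax {n : ℕ} (hn : 0 < n) (g : Fin n → ℝ) : ℝ :=
  Finset.univ.sup' (Finset.univ_nonempty_iff.mpr (Fin.pos_iff_nonempty.mp hn)) g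

/-- Weighted Thompson metric `μ` with weights `γ`. -/
def thomW {K n1 d : ℕ} (γ : Fin (K + 1) → ℝ) (z z' : PV K n1 d) : ℝ :=
  (∑ i : Fin K, γ i.castSucc *
      ‖(fun j : Fin n1 => Real.log (z.1 i j) - Real.log (z'.1 i j))‖)
    + γ (Fin.last K) *
      ‖(fun (a : Fin n1) (b : Fin d) => Real.log (z.2 a b) - Real.log (z'.2 a b))‖

/-- The function `Ψ^α_{p,q}` from the paper. -/
def PsiF {r : ℕ} (α : Fin r → ℝ) (p q : ℝ) (δ : Fin r → ℝ) (t : ℝ) : ℝ :=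
  let J : Finset (Fin r) := Finset.univ.filter fun l => α l * p ≤ q
  let Jc : Finset (Fin r) := Finset.univ.filter fun l => q < α l * p
  let ab : ℝ := if h : J.Nonempty then J.inf' h α else 0
  ((∑ l ∈ J, (δ l * t ^ α l) ^ (p * q / (q - ab * p))) ^ (1 - ab * p / q)
    + if h : Jc.Nonempty then Jc.sup' h fun j => (δ j * t ^ α j) ^ p else 0) ^ (1 / p)

end

/-! A maximiser `z` of `Φ` on `S₊` exists by compactness. If some entry of `z` vanished, one could
move along the sphere `x_b^p + x_{b'}^p = c^p` from `(0, c)`, where `b'` is an entry of the same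
block with `x_{b'} = c > 0`. Since `p > 1` the velocity of this curve at the start is the unit
vector `e_b`, so the one-sided Fermat rule gives `∂Φ/∂z_b ≤ 0`, contradicting positivity of the
gradient. -/

open Set Function Filter Topology

lemma Finset.sum_univ_update {ι M : Type*} [Fintype ι] [DecidableEq ι] [AddCommGroup M]
    (f : ι → M) (i : ι) (y : M) : ∑ j, update f i y j = ∑ j, f j - f i + y := by
  rw [Finset.sum_update_of_mem (Finset.mem_univ i), Finset.sdiff_singleton_eq_erase,
    ← Finset.add_sum_erase _ f (Finset.mem_univ i)]
  abel

lemma IsMaxOn.fderiv_apply_nonpos_of_hasDerivAt {E : Type*} [NormedAddCommGroup E]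
    [NormedSpace ℝ E] {Φ : E → ℝ} {s : Set E} {z v : E} {γ : ℝ → E}
    (hmax : IsMaxOn Φ s z) (hΦ : DifferentiableAt ℝ Φ z) (hγ : HasDerivAt γ v 0)
    (hγ0 : γ 0 = z) (hγs : ∀ᶠ t in 𝓝[≥] 0, γ t ∈ s) : fderiv ℝ Φ z v ≤ 0 := by
  subst hγ0
  have hderiv : HasDerivAt (Φ ∘ γ) (fderiv ℝ Φ (γ 0) v) 0 := hΦ.hasFDerivAt.comp_hasDerivAt 0 hγ
  have hloc : IsLocalMaxOn (Φ ∘ γ) (Ici 0) 0 := by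
    filter_upwards [hγs] with t ht using hmax ht
  have hcone : (1 : ℝ) ∈ posTangentConeAt (Ici 0) 0 :=
    mem_posTangentConeAt_of_segment_subset (by simp [segment_eq_Icc, Icc_subset_Ici_self])
  simpa using hloc.hasFDerivWithinAt_nonpos hderiv.hasDerivWithinAt.hasFDerivWithinAt hcone

section PNorm

variable {ι : Type} [Fintype ι] {p : ℝ}

lemma pnorm_zero (hp : p ≠ 0) : pnorm p (0 : ι → ℝ) = 0 := by
  simp [pnorm, Real.zero_rpow hp, Real.zero_rpow (inv_ne_zero hp)]

lemma pnorm_single [DecidableEq ι] (hp : p ≠ 0) (i : ι) {ρ : ℝ} (hρ : 0 ≤ ρ) :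
    pnorm p (Pi.single i ρ) = ρ := by
  have hsum : ∑ j, |Pi.single i ρ j| ^ p = ρ ^ p := by
    rw [Finset.sum_eq_single i (fun j _ hj => by simp [hj, Real.zero_rpow hp])
      (by simp), Pi.single_eq_same, abs_of_nonneg hρ]
  rw [pnorm, hsum, one_div, Real.rpow_rpow_inv hρ hp]

lemma abs_le_pnorm (hp : 0 < p) (x : ι → ℝ) (i : ι) : |x i| ≤ pnorm p x := by
  have hle : |x i| ^ p ≤ ∑ j, |x j| ^ p :=
    Finset.single_le_sum (f := fun j => |x j| ^ p) (fun j _ => by positivity) (Finset.mem_univ i)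
  calc |x i| = (|x i| ^ p) ^ (1 / p) := by
        rw [one_div, Real.rpow_rpow_inv (abs_nonneg _) hp.ne']
    _ ≤ pnorm p x := by unfold pnorm; gcongr

lemma continuous_pnorm (hp : 0 < p) : Continuous (pnorm (ι := ι) p) := by
  unfold pnorm
  refine Continuous.rpow_const ?_ fun _ => Or.inr (by positivity)
  exact continuous_finsetSum _ fun i _ =>
    (continuous_abs.comp (continuous_apply i)).rpow_const fun _ => Or.inr hp.le

lemma pnormM_eq_pnorm_uncurry {κ : Type} [Fintype κ] (x : ι → κ → ℝ) :
    pnormM p x = pnorm p (uncurry x) := by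
  simp [pnormM, pnorm, Fintype.sum_prod_type]

end PNorm

lemma exists_curve_pnorm_eq {ι : Type} [Fintype ι] [DecidableEq ι] {p : ℝ} (hp : 1 < p)
    {x : ι → ℝ} (hx : 0 ≤ x) (hx0 : x ≠ 0) {b : ι} (hb : x b = 0) :
    ∃ v : ℝ → ι → ℝ, v 0 = x ∧ HasDerivAt v (Pi.single b 1) 0 ∧
      ∀ᶠ t in 𝓝[≥] 0, 0 ≤ v t ∧ pnorm p (v t) = pnorm p x := by
  have hp0 : 0 < p := by linarith
  obtain ⟨b', hb'⟩ : ∃ b', 0 < x b' := by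
    obtain ⟨b', hne⟩ := Function.ne_iff.1 hx0
    exact ⟨b', (hx b').lt_of_ne' hne⟩
  have hbb' : b' ≠ b := by rintro rfl; linarith
  set c := x b'
  set g : ℝ → ℝ := fun t => (c ^ p - t ^ p) ^ (1 / p) with hg
  have hg0 : g 0 = c := by
    simp [hg, Real.zero_rpow hp0.ne', Real.rpow_rpow_inv hb'.le hp0.ne']
  have hg' : HasDerivAt g 0 0 := by
    have hpow : HasDerivAt (fun t : ℝ => c ^ p - t ^ p) 0 0 := by
      simpa [Real.zero_rpow (sub_pos.2 hp).ne'] using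
        (Real.hasDerivAt_rpow_const (x := 0) (Or.inr hp.le)).const_sub (c ^ p)
    simpa [hg] using hpow.rpow_const (p := 1 / p)
      (Or.inl (by simp [Real.zero_rpow hp0.ne', (Real.rpow_pos_of_pos hb' p).ne']))
  have hg_pow : ∀ t ∈ Icc 0 c, 0 ≤ g t ∧ g t ^ p = c ^ p - t ^ p := by
    intro t ht
    have hsub : 0 ≤ c ^ p - t ^ p :=
      sub_nonneg.2 (Real.rpow_le_rpow ht.1 ht.2 hp0.le)
    exact ⟨by positivity, by rw [hg, one_div, Real.rpow_inv_rpow hsub hp0.ne']⟩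
  refine ⟨fun t => update (update x b t) b' (g t), ?_, ?_, ?_⟩
  · change update (update x b 0) b' (g 0) = x
    rw [hg0, ← hb, update_eq_self]
    exact update_eq_self b' x
  · refine hasDerivAt_pi.2 fun j => ?_
    rcases eq_or_ne j b' with rfl | hjb'
    · simpa [hbb'] using hg'
    rcases eq_or_ne j b with rfl | hjb
    · simpa [hjb'] using hasDerivAt_id' (0 : ℝ)
    · simpa [hjb', hjb] using hasDerivAt_const (0 : ℝ) (x j)
  · filter_upwards [Icc_mem_nhdsGE hb'] with t ht
    obtain ⟨hgt, hgt_pow⟩ := hg_pow t ht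
    refine ⟨fun j => ?_, ?_⟩
    · simp only [update_apply]
      split_ifs
      exacts [hgt, ht.1, hx j]
    · have hsum : ∑ j, |update (update x b t) b' (g t) j| ^ p = ∑ j, |x j| ^ p := by
        have habs : (fun j => |update (update x b t) b' (g t) j| ^ p) =
            update (update (fun j => |x j| ^ p) b (t ^ p)) b' (c ^ p - t ^ p) := by
          ext j
          simp only [update_apply]
          split_ifs
          exacts [by rw [abs_of_nonneg hgt, hgt_pow], by rw [abs_of_nonneg ht.1], rfl]
        rw [habs, Finset.sum_univ_update, Finset.sum_univ_update, update_of_ne hbb', hb,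
          abs_zero, Real.zero_rpow hp0.ne', abs_of_pos hb']
        ring
      simp only [pnorm, hsum]

section Constraint

variable {K n1 d : ℕ} {pw pu ρw ρu : ℝ}

lemma isCompact_Splus (hpw : 0 < pw) (hpu : 0 < pu) :
    IsCompact (Splus K n1 d pw pu ρw ρu) := by
  have hclosed : IsClosed (Splus K n1 d pw pu ρw ρu) := by
    simp only [Splus, ofPred_and, ofPred_forall]
    refine (isClosed_iInter fun i => isClosed_iInter fun j =>
      isClosed_le continuous_const (by fun_prop)).inter
      ((isClosed_iInter fun a => isClosed_iInter fun b =>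
        isClosed_le continuous_const (by fun_prop)).inter
      ((isClosed_iInter fun i => isClosed_eq ((continuous_pnorm hpw).comp (by fun_prop))
        continuous_const).inter (isClosed_eq ?_ continuous_const)))
    simp only [pnormM_eq_pnorm_uncurry]
    exact (continuous_pnorm hpu).comp (continuous_pi fun q => by fun_prop)
  refine Metric.isCompact_of_isClosed_isBounded hclosed
    (isBounded_iff_forall_norm_le.2 ⟨max |ρw| |ρu|, ?_⟩)
  rintro z ⟨-, -, hw, hu⟩
  have hC : 0 ≤ max |ρw| |ρu| := le_max_of_le_left (abs_nonneg _)
  refine norm_prod_le_iff.2 ⟨?_, ?_⟩ <;>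
    refine (pi_norm_le_iff_of_nonneg hC).2 fun i => (pi_norm_le_iff_of_nonneg hC).2 fun j => ?_
  · calc ‖z.1 i j‖ ≤ pnorm pw (z.1 i) := abs_le_pnorm hpw _ j
      _ ≤ max |ρw| |ρu| := (hw i).trans_le ((le_abs_self _).trans (le_max_left _ _))
  · calc ‖z.2 i j‖ ≤ pnorm pu (uncurry z.2) := abs_le_pnorm hpu (uncurry z.2) (i, j)
      _ ≤ max |ρw| |ρu| := by
        rw [← pnormM_eq_pnorm_uncurry, hu]
        exact (le_abs_self _).trans (le_max_right _ _)

lemma Splus_nonempty (hn1 : 0 < n1) (hd : 0 < d) (hpw : pw ≠ 0) (hpu : pu ≠ 0)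
    (hρw : 0 ≤ ρw) (hρu : 0 ≤ ρu) : (Splus K n1 d pw pu ρw ρu).Nonempty := by
  refine ⟨(fun _ => Pi.single ⟨0, hn1⟩ ρw, curry (Pi.single (⟨0, hn1⟩, ⟨0, hd⟩) ρu)),
    fun i j => ?_, fun a b => ?_, fun i => pnorm_single hpw _ hρw, ?_⟩
  · exact (Pi.single_nonneg (α := fun _ => ℝ)).2 hρw j
  · exact (Pi.single_nonneg (α := fun _ => ℝ)).2 hρu (a, b)
  · rw [pnormM_eq_pnorm_uncurry, uncurry_curry, pnorm_single hpu _ hρu]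

lemma exists_curve_Splus_eW (hpw : 1 < pw) (hρw : 0 < ρw) {z : PV K n1 d}
    (hz : z ∈ Splus K n1 d pw pu ρw ρu) {a : Fin K} {b : Fin n1} (hab : z.1 a b = 0) :
    ∃ γ : ℝ → PV K n1 d, γ 0 = z ∧ HasDerivAt γ (eW a b) 0 ∧
      ∀ᶠ t in 𝓝[≥] 0, γ t ∈ Splus K n1 d pw pu ρw ρu := by
  have hrow : z.1 a ≠ 0 := by
    intro h
    have := hz.2.2.1 a
    rw [h, pnorm_zero (by linarith)] at this
    exact hρw.ne this
  obtain ⟨v, hv0, hv, hvS⟩ := exists_curve_pnorm_eq hpw (fun j => hz.1 a j) hrow hab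
  refine ⟨fun t => (update z.1 a (v t), z.2), by simp [hv0], ?_, ?_⟩
  · refine (((hasFDerivAt_update z.1 (i := a) (v 0)).comp_hasDerivAt 0 hv).prodMk
      (hasDerivAt_const (0 : ℝ) z.2)).congr_deriv ?_
    unfold eW
    congr 1
    ext i j
    by_cases hi : i = a <;> simp [Pi.single_apply, hi]
  · filter_upwards [hvS] with t ⟨hnn, hnorm⟩
    refine ⟨fun i j => ?_, hz.2.1, fun i => ?_, hz.2.2.2⟩ <;> rcases eq_or_ne i a with rfl | hi
    · simpa using hnn j
    · simpa [hi] using hz.1 i j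
    · simpa [hnorm] using hz.2.2.1 i
    · simpa [hi] using hz.2.2.1 i

lemma exists_curve_Splus_eU (hpu : 1 < pu) (hρu : 0 < ρu) {z : PV K n1 d}
    (hz : z ∈ Splus K n1 d pw pu ρw ρu) {a : Fin n1} {b : Fin d} (hab : z.2 a b = 0) :
    ∃ γ : ℝ → PV K n1 d, γ 0 = z ∧ HasDerivAt γ (eU a b) 0 ∧
      ∀ᶠ t in 𝓝[≥] 0, γ t ∈ Splus K n1 d pw pu ρw ρu := by
  have hu : uncurry z.2 ≠ 0 := by
    intro h
    have := hz.2.2.2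
    rw [pnormM_eq_pnorm_uncurry, h, pnorm_zero (by linarith)] at this
    exact hρu.ne this
  obtain ⟨v, hv0, hv, hvS⟩ :=
    exists_curve_pnorm_eq (x := uncurry z.2) (b := (a, b)) hpu (fun q => hz.2.1 q.1 q.2) hu hab
  refine ⟨fun t => (z.1, curry (v t)), by simp [hv0], ?_, ?_⟩
  · refine (hasDerivAt_const (0 : ℝ) z.1).prodMk
      (hasDerivAt_pi.2 fun i => hasDerivAt_pi.2 fun j => ?_)
    refine (hasDerivAt_pi.1 hv (i, j)).congr_deriv ?_
    simp only [Pi.single_apply, Prod.mk.injEq]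
  · filter_upwards [hvS] with t ⟨hnn, hnorm⟩
    refine ⟨hz.1, fun i j => hnn (i, j), hz.2.2.1, ?_⟩
    rw [pnormM_eq_pnorm_uncurry, uncurry_curry, hnorm, ← pnormM_eq_pnorm_uncurry, hz.2.2.2]

end Constraint

/-- If `∇Φ` is strictly positive on `S₊`, the global maximum of `Φ` on `S₊`
is attained at a point of `S₊₊`. -/
theorem statement1 {K n1 d : ℕ} (hn1 : 0 < n1) (hd : 0 < d)
    (pw pu : ℝ) (hpw : 1 < pw) (hpu : 1 < pu)
    (ρw ρu : ℝ) (hρw : 0 < ρw) (hρu : 0 < ρu)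
    (Φ : PV K n1 d → ℝ) (hΦ : Differentiable ℝ Φ)
    (hgrad : ∀ z ∈ Splus K n1 d pw pu ρw ρu,
      (∀ i j, 0 < gradW Φ z i j) ∧ (∀ a b, 0 < gradU Φ z a b)) :
    ∃ zs ∈ Spp K n1 d pw pu ρw ρu, IsMaxOn Φ (Splus K n1 d pw pu ρw ρu) zs := by
  have hcompact : IsCompact (Splus K n1 d pw pu ρw ρu) :=
    isCompact_Splus (by linarith) (by linarith)
  obtain ⟨z, hz, hmax⟩ := hcompact.exists_isMaxOn
    (Splus_nonempty hn1 hd (by linarith) (by linarith) hρw.le hρu.le)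
    hΦ.continuous.continuousOn
  refine ⟨z, ⟨fun a b => (hz.1 a b).lt_of_ne' fun hab => ?_,
    fun a b => (hz.2.1 a b).lt_of_ne' fun hab => ?_, hz.2.2.1, hz.2.2.2⟩, hmax⟩
  · obtain ⟨γ, hγ0, hγ, hγS⟩ := exists_curve_Splus_eW hpw hρw hz hab
    exact ((hgrad z hz).1 a b).not_ge (hmax.fderiv_apply_nonpos_of_hasDerivAt (hΦ z) hγ hγ0 hγS)
  · obtain ⟨γ, hγ0, hγ, hγS⟩ := exists_curve_Splus_eU hpu hρu hz hab
    exact ((hgrad z hz).2 a b).not_ge (hmax.fderiv_apply_nonpos_of_hasDerivAt (hΦ z) hγ hγ0 hγS)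
end

section
/- Let F : B_{++} → V_{++} be continuously differentiable with components F_{w_{i,j}} (i ∈ [K], j ∈ [n₁]) and F_{u_{ab}} (a ∈ [n₁], b ∈ [d]), and let A ∈ ℝ^{(K+1)×(K+1)}_+ satisfy, for all i,k ∈ [K], a,j ∈ [n₁], b ∈ [d] and all (w,u) ∈ B_{++}: ⟨|∇_{w_k} F_{w_{i,j}}(w,u)|, w_k⟩ ≤ A_{i,k} F_{w_{i,j}}(w,u), ⟨|∇_u F_{w_{i,j}}(w,u)|, u⟩ ≤ A_{i,K+1} F_{w_{i,j}}(w,u), ⟨|∇_{w_k} F_{u_{ab}}(w,u)|, w_k⟩ ≤ A_{K+1,k} F_{u_{ab}}(w,u), and ⟨|∇_u F_{u_{ab}}(w,u)|, u⟩ ≤ A_{K+1,K+1} F_{u_{ab}}(w,u). Then for any weights γ_1,…,γ_{K+1} > 0 and all (w,u), (w̃,ũ) ∈ B_{++} it holds μ(F(w,u), F(w̃,ũ)) ≤ U · μ((w,u),(w̃,ũ)) with U = max_{k∈[K+1]} (Aᵀγ)_k / γ_k. -/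
/-!
Join `z` and `z'` by the entrywise geodesic `t ↦ z ^ (1 - t) * z' ^ t` of the Thompson metric.
It stays in `B₊₊` because the `p`-th power of a weighted geometric mean is at most the
weighted arithmetic mean of the `p`-th powers, and its velocity is
`z_t * (log z' - log z)`, dominated block by block by `z_t` times the block distances `δ_k`.
The hypotheses on `A` then bound the logarithmic derivative of every coordinate of `F` in
block `r` along the path by `(A δ)_r`, so by the mean value theorem the block distances of
`F z, F z'` are at most `A δ`. Pairing with `γ`: `γ ⬝ (A δ) = (Aᵀ γ) ⬝ δ ≤ U (γ ⬝ δ)`.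
-/

open Real Matrix

section GeomInterp

variable {a b t : ℝ}

noncomputable def geomInterp (t a b : ℝ) : ℝ := exp (log a + t * (log b - log a))

lemma geomInterp_pos : 0 < geomInterp t a b := exp_pos _

lemma geomInterp_zero (ha : 0 < a) : geomInterp 0 a b = a := by
  simp [geomInterp, exp_log ha]

lemma geomInterp_one (hb : 0 < b) : geomInterp 1 a b = b := by
  simp [geomInterp, exp_log hb]

lemma hasDerivAt_geomInterp :
    HasDerivAt (fun t => geomInterp t a b) (geomInterp t a b * (log b - log a)) t :=
  ((hasDerivAt_mul_const _).const_add _).exp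

lemma abs_geomInterp_rpow_le (p : ℝ) (ha : 0 < a) (hb : 0 < b) (ht : t ∈ Set.Icc (0 : ℝ) 1) :
    |geomInterp t a b| ^ p ≤ (1 - t) * |a| ^ p + t * |b| ^ p := by
  rw [abs_of_pos geomInterp_pos, abs_of_pos ha, abs_of_pos hb]
  have hap : 0 < a ^ p := rpow_pos_of_pos ha p
  have hbp : 0 < b ^ p := rpow_pos_of_pos hb p
  have hgeom : geomInterp t a b ^ p = (a ^ p) ^ (1 - t) * (b ^ p) ^ t := by
    rw [rpow_def_of_pos geomInterp_pos, geomInterp, log_exp, rpow_def_of_pos hap,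
      rpow_def_of_pos hbp, log_rpow ha, log_rpow hb, ← exp_add]
    ring_nf
  rw [hgeom]
  exact geom_mean_le_arith_mean2_weighted (by linarith [ht.2]) ht.1 hap.le hbp.le (by ring)

end GeomInterp

lemma pnorm_nonneg {ι : Type} [Fintype ι] (p : ℝ) (x : ι → ℝ) : 0 ≤ pnorm p x :=
  rpow_nonneg (Finset.sum_nonneg fun _ _ => rpow_nonneg (abs_nonneg _) _) _

lemma pnorm_le_iff {ι : Type} [Fintype ι] {p ρ : ℝ} (hp : 0 < p) (hρ : 0 ≤ ρ) (x : ι → ℝ) :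
    pnorm p x ≤ ρ ↔ ∑ i, |x i| ^ p ≤ ρ ^ p := by
  have hs : 0 ≤ ∑ i, |x i| ^ p := Finset.sum_nonneg fun _ _ => rpow_nonneg (abs_nonneg _) p
  rw [pnorm, one_div, ← rpow_le_rpow_iff (rpow_nonneg hs _) hρ hp, rpow_inv_rpow hs hp.ne']

lemma pnormM_eq_pnorm {ι κ : Type} [Fintype ι] [Fintype κ] (p : ℝ) (x : ι → κ → ℝ) :
    pnormM p x = pnorm p (fun q : ι × κ => x q.1 q.2) := by
  rw [pnormM, pnorm, Fintype.sum_prod_type]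

lemma pnorm_geomInterp_le {ι : Type} [Fintype ι] {p ρ t : ℝ} (hp : 0 < p) {x y : ι → ℝ}
    (hx0 : ∀ i, 0 < x i) (hy0 : ∀ i, 0 < y i) (hx : pnorm p x ≤ ρ) (hy : pnorm p y ≤ ρ)
    (ht : t ∈ Set.Icc (0 : ℝ) 1) :
    pnorm p (fun i => geomInterp t (x i) (y i)) ≤ ρ := by
  have hρ : 0 ≤ ρ := (pnorm_nonneg p x).trans hx
  rw [pnorm_le_iff hp hρ] at hx hy ⊢
  calc ∑ i, |geomInterp t (x i) (y i)| ^ p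
      ≤ ∑ i, ((1 - t) * |x i| ^ p + t * |y i| ^ p) :=
        Finset.sum_le_sum fun i _ => abs_geomInterp_rpow_le p (hx0 i) (hy0 i) ht
    _ = (1 - t) * ∑ i, |x i| ^ p + t * ∑ i, |y i| ^ p := by
        rw [Finset.sum_add_distrib, Finset.mul_sum, Finset.mul_sum]
    _ ≤ (1 - t) * ρ ^ p + t * ρ ^ p := by gcongr <;> linarith [ht.1, ht.2]
    _ = ρ ^ p := by ring

section PV

variable {K n1 d : ℕ}

noncomputable def geomPath (z z' : PV K n1 d) (t : ℝ) : PV K n1 d :=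
  (fun k s => geomInterp t (z.1 k s) (z'.1 k s), fun a b => geomInterp t (z.2 a b) (z'.2 a b))

noncomputable def geomVel (z z' : PV K n1 d) (t : ℝ) : PV K n1 d :=
  (fun k s => geomInterp t (z.1 k s) (z'.1 k s) * (log (z'.1 k s) - log (z.1 k s)),
    fun a b => geomInterp t (z.2 a b) (z'.2 a b) * (log (z'.2 a b) - log (z.2 a b)))

lemma geomPath_zero {z z' : PV K n1 d} (hz : (∀ i j, 0 < z.1 i j) ∧ ∀ a b, 0 < z.2 a b) :
    geomPath z z' 0 = z :=
  Prod.ext (funext₂ fun i j => geomInterp_zero (hz.1 i j))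
    (funext₂ fun a b => geomInterp_zero (hz.2 a b))

lemma geomPath_one {z z' : PV K n1 d} (hz' : (∀ i j, 0 < z'.1 i j) ∧ ∀ a b, 0 < z'.2 a b) :
    geomPath z z' 1 = z' :=
  Prod.ext (funext₂ fun i j => geomInterp_one (hz'.1 i j))
    (funext₂ fun a b => geomInterp_one (hz'.2 a b))

lemma hasDerivAt_geomPath (z z' : PV K n1 d) (t : ℝ) :
    HasDerivAt (geomPath z z') (geomVel z z' t) t := by
  refine .prodMk ?_ ?_ <;> refine hasDerivAt_pi.2 fun i => hasDerivAt_pi.2 fun j => ?_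
  exacts [hasDerivAt_geomInterp, hasDerivAt_geomInterp]

lemma geomPath_mem_Bpp {pw pu ρw ρu : ℝ} (hpw : 0 < pw) (hpu : 0 < pu) {z z' : PV K n1 d}
    (hz : z ∈ Bpp K n1 d pw pu ρw ρu) (hz' : z' ∈ Bpp K n1 d pw pu ρw ρu) {t : ℝ}
    (ht : t ∈ Set.Icc (0 : ℝ) 1) : geomPath z z' t ∈ Bpp K n1 d pw pu ρw ρu := by
  obtain ⟨hw, hu, hwρ, huρ⟩ := hz
  obtain ⟨hw', hu', hwρ', huρ'⟩ := hz'
  refine ⟨fun _ _ => geomInterp_pos, fun _ _ => geomInterp_pos,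
    fun i => pnorm_geomInterp_le hpw (hw i) (hw' i) (hwρ i) (hwρ' i) ht, ?_⟩
  rw [pnormM_eq_pnorm] at huρ huρ' ⊢
  exact pnorm_geomInterp_le hpu (fun q => hu q.1 q.2) (fun q => hu' q.1 q.2) huρ huρ' ht

lemma eq_sum_eW_add_sum_eU (v : PV K n1 d) :
    v = (∑ k, ∑ s, v.1 k s • (eW k s : PV K n1 d)) +
      ∑ a, ∑ b, v.2 a b • (eU a b : PV K n1 d) := by
  refine Prod.ext ?_ ?_ <;> funext i j <;>
    simp [eW, eU, Prod.fst_sum, Prod.snd_sum, Finset.sum_apply, ite_and]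

noncomputable def blockDist (z z' : PV K n1 d) : Fin (K + 1) → ℝ :=
  Fin.snoc (α := fun _ => ℝ) (fun i => ‖fun j => log (z.1 i j) - log (z'.1 i j)‖)
    ‖fun a b => log (z.2 a b) - log (z'.2 a b)‖

lemma blockDist_nonneg (z z' : PV K n1 d) : 0 ≤ blockDist z z' := by
  intro k
  induction k using Fin.lastCases <;> simp [blockDist]

lemma abs_log_sub_le_blockDist_castSucc (z z' : PV K n1 d) (k : Fin K) (s : Fin n1) :
    |log (z.1 k s) - log (z'.1 k s)| ≤ blockDist z z' k.castSucc := by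
  simpa [blockDist] using norm_le_pi_norm (fun j => log (z.1 k j) - log (z'.1 k j)) s

lemma abs_log_sub_le_blockDist_last (z z' : PV K n1 d) (a : Fin n1) (b : Fin d) :
    |log (z.2 a b) - log (z'.2 a b)| ≤ blockDist z z' (Fin.last K) := by
  simpa [blockDist] using (norm_le_pi_norm (fun j => log (z.2 a j) - log (z'.2 a j)) b).trans
    (norm_le_pi_norm (fun i j => log (z.2 i j) - log (z'.2 i j)) a)

lemma blockDist_le_of_abs_log_sub_le {z z' : PV K n1 d} {B : Fin (K + 1) → ℝ} (hB : 0 ≤ B)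
    (hw : ∀ i j, |log (z.1 i j) - log (z'.1 i j)| ≤ B i.castSucc)
    (hu : ∀ a b, |log (z.2 a b) - log (z'.2 a b)| ≤ B (Fin.last K)) :
    blockDist z z' ≤ B := by
  intro k
  induction k using Fin.lastCases with
  | last =>
    simpa [blockDist, pi_norm_le_iff_of_nonneg (hB _)] using hu
  | cast i =>
    simpa [blockDist, pi_norm_le_iff_of_nonneg (hB _)] using hw i

lemma thomW_eq_dotProduct_blockDist (γ : Fin (K + 1) → ℝ) (z z' : PV K n1 d) :
    thomW γ z z' = γ ⬝ᵥ blockDist z z' := by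
  simp [thomW, dotProduct, Fin.sum_univ_castSucc, blockDist]

lemma abs_geomVel_fst_le (z z' : PV K n1 d) (t : ℝ) (k : Fin K) (s : Fin n1) :
    |(geomVel z z' t).1 k s| ≤ blockDist z z' k.castSucc * (geomPath z z' t).1 k s := by
  rw [geomVel, geomPath, abs_mul, abs_of_pos geomInterp_pos, mul_comm, abs_sub_comm]
  exact mul_le_mul_of_nonneg_right (abs_log_sub_le_blockDist_castSucc z z' k s)
    geomInterp_pos.le

lemma abs_geomVel_snd_le (z z' : PV K n1 d) (t : ℝ) (a : Fin n1) (b : Fin d) :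
    |(geomVel z z' t).2 a b| ≤ blockDist z z' (Fin.last K) * (geomPath z z' t).2 a b := by
  rw [geomVel, geomPath, abs_mul, abs_of_pos geomInterp_pos, mul_comm, abs_sub_comm]
  exact mul_le_mul_of_nonneg_right (abs_log_sub_le_blockDist_last z z' a b)
    geomInterp_pos.le

lemma abs_apply_le_dotProduct_mul (ℓ : PV K n1 d →L[ℝ] ℝ) {y v : PV K n1 d}
    {δ c : Fin (K + 1) → ℝ} {m : ℝ} (hδ : 0 ≤ δ)
    (hv₁ : ∀ k s, |v.1 k s| ≤ δ k.castSucc * y.1 k s)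
    (hv₂ : ∀ a b, |v.2 a b| ≤ δ (Fin.last K) * y.2 a b)
    (hc₁ : ∀ k, ∑ s, y.1 k s * |ℓ (eW k s)| ≤ c k.castSucc * m)
    (hc₂ : ∑ a, ∑ b, y.2 a b * |ℓ (eU a b)| ≤ c (Fin.last K) * m) :
    |ℓ v| ≤ (c ⬝ᵥ δ) * m := by
  have hw : ∀ k, |∑ s, v.1 k s * ℓ (eW k s)| ≤ δ k.castSucc * (c k.castSucc * m) := fun k =>
    calc |∑ s, v.1 k s * ℓ (eW k s)|
        ≤ ∑ s, δ k.castSucc * (y.1 k s * |ℓ (eW k s)|) :=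
          (Finset.abs_sum_le_sum_abs _ _).trans <| Finset.sum_le_sum fun s _ => by
            rw [abs_mul, ← mul_assoc]; gcongr; exact hv₁ k s
      _ = δ k.castSucc * ∑ s, y.1 k s * |ℓ (eW k s)| := (Finset.mul_sum ..).symm
      _ ≤ δ k.castSucc * (c k.castSucc * m) := mul_le_mul_of_nonneg_left (hc₁ k) (hδ _)
  have hu : |∑ a, ∑ b, v.2 a b * ℓ (eU a b)| ≤ δ (Fin.last K) * (c (Fin.last K) * m) :=
    calc |∑ a, ∑ b, v.2 a b * ℓ (eU a b)|
        ≤ ∑ a, ∑ b, δ (Fin.last K) * (y.2 a b * |ℓ (eU a b)|) :=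
          (Finset.abs_sum_le_sum_abs _ _).trans <| Finset.sum_le_sum fun a _ =>
            (Finset.abs_sum_le_sum_abs _ _).trans <| Finset.sum_le_sum fun b _ => by
              rw [abs_mul, ← mul_assoc]; gcongr; exact hv₂ a b
      _ = δ (Fin.last K) * ∑ a, ∑ b, y.2 a b * |ℓ (eU a b)| := by
          simp only [Finset.mul_sum]
      _ ≤ δ (Fin.last K) * (c (Fin.last K) * m) := mul_le_mul_of_nonneg_left hc₂ (hδ _)
  rw [eq_sum_eW_add_sum_eU v]
  simp only [map_add, map_sum, map_smul, smul_eq_mul]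
  calc _ ≤ ∑ k, |∑ s, v.1 k s * ℓ (eW k s)| + |∑ a, ∑ b, v.2 a b * ℓ (eU a b)| :=
        (abs_add_le _ _).trans (add_le_add_left (Finset.abs_sum_le_sum_abs _ _) _)
    _ ≤ ∑ k, δ k.castSucc * (c k.castSucc * m) + δ (Fin.last K) * (c (Fin.last K) * m) :=
        add_le_add (Finset.sum_le_sum fun k _ => hw k) hu
    _ = (c ⬝ᵥ δ) * m := by
        rw [dotProduct, Fin.sum_univ_castSucc, add_mul, Finset.sum_mul]
        congr 1
        · exact Finset.sum_congr rfl fun k _ => by ring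
        · ring

def coordW (i : Fin K) (j : Fin n1) : PV K n1 d →L[ℝ] ℝ :=
  (ContinuousLinearMap.proj (R := ℝ) (φ := fun _ : Fin n1 => ℝ) j).comp
    ((ContinuousLinearMap.proj i).comp (ContinuousLinearMap.fst ℝ _ _))

def coordU (a : Fin n1) (b : Fin d) : PV K n1 d →L[ℝ] ℝ :=
  (ContinuousLinearMap.proj (R := ℝ) (φ := fun _ : Fin d => ℝ) b).comp
    ((ContinuousLinearMap.proj a).comp (ContinuousLinearMap.snd ℝ _ _))

end PV

lemma abs_log_sub_le_of_abs_deriv_le {f f' : ℝ → ℝ} {B : ℝ}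
    (hf : ∀ t ∈ Set.Icc (0 : ℝ) 1, HasDerivWithinAt f (f' t) (Set.Icc 0 1) t)
    (hpos : ∀ t ∈ Set.Icc (0 : ℝ) 1, 0 < f t)
    (hle : ∀ t ∈ Set.Icc (0 : ℝ) 1, |f' t| ≤ B * f t) :
    |log (f 1) - log (f 0)| ≤ B := by
  have h := Convex.norm_image_sub_le_of_norm_hasDerivWithin_le (f := log ∘ f)
    (fun t ht => (hf t ht).log (hpos t ht).ne')
    (fun t ht => by
      rw [norm_div, norm_of_nonneg (hpos t ht).le, div_le_iff₀ (hpos t ht)]; exact hle t ht)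
    (convex_Icc 0 1) (Set.left_mem_Icc.2 zero_le_one) (Set.right_mem_Icc.2 zero_le_one)
  simpa using h

lemma abs_log_apply_sub_le {K n1 d : ℕ} {S : Set (PV K n1 d)} {F : PV K n1 d → PV K n1 d}
    {F' : PV K n1 d → PV K n1 d →L[ℝ] PV K n1 d} {z z' : PV K n1 d}
    (hz : (∀ i j, 0 < z.1 i j) ∧ ∀ a b, 0 < z.2 a b)
    (hz' : (∀ i j, 0 < z'.1 i j) ∧ ∀ a b, 0 < z'.2 a b)
    (hS : Set.MapsTo (geomPath z z') (Set.Icc 0 1) S)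
    (hdF : ∀ y ∈ S, HasFDerivWithinAt F (F' y) S y)
    (ℓ : PV K n1 d →L[ℝ] ℝ) (c : Fin (K + 1) → ℝ) (hpos : ∀ y ∈ S, 0 < ℓ (F y))
    (hc₁ : ∀ y ∈ S, ∀ k, ∑ s, y.1 k s * |ℓ (F' y (eW k s))| ≤ c k.castSucc * ℓ (F y))
    (hc₂ : ∀ y ∈ S, ∑ a, ∑ b, y.2 a b * |ℓ (F' y (eU a b))| ≤ c (Fin.last K) * ℓ (F y)) :
    |log (ℓ (F z)) - log (ℓ (F z'))| ≤ c ⬝ᵥ blockDist z z' := by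
  have hder : ∀ t ∈ Set.Icc (0 : ℝ) 1, HasDerivWithinAt (fun t => ℓ (F (geomPath z z' t)))
      (ℓ (F' (geomPath z z' t) (geomVel z z' t))) (Set.Icc 0 1) t := fun t ht =>
    ℓ.hasFDerivAt.comp_hasDerivWithinAt t <| (hdF _ (hS ht)).comp_hasDerivWithinAt t
      (hasDerivAt_geomPath z z' t).hasDerivWithinAt hS
  have h := abs_log_sub_le_of_abs_deriv_le hder (fun t ht => hpos _ (hS ht)) fun t ht =>
    abs_apply_le_dotProduct_mul (ℓ.comp (F' (geomPath z z' t))) (blockDist_nonneg z z')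
      (abs_geomVel_fst_le z z' t) (abs_geomVel_snd_le z z' t) (hc₁ _ (hS ht)) (hc₂ _ (hS ht))
  rwa [geomPath_one hz', geomPath_zero hz, abs_sub_comm] at h

lemma dotProduct_mulVec_le_sup_mul {ι : Type*} [Fintype ι]
    (hne : (Finset.univ : Finset ι).Nonempty) (A : Matrix ι ι ℝ) {γ δ : ι → ℝ}
    (hγ : ∀ k, 0 < γ k) (hδ : 0 ≤ δ) :
    γ ⬝ᵥ (A *ᵥ δ) ≤ Finset.univ.sup' hne (fun k => (Aᵀ *ᵥ γ) k / γ k) * (γ ⬝ᵥ δ) := by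
  rw [dotProduct_mulVec, ← mulVec_transpose, dotProduct, dotProduct, Finset.mul_sum]
  refine Finset.sum_le_sum fun k _ => ?_
  have hk : (Aᵀ *ᵥ γ) k ≤ Finset.univ.sup' hne (fun k => (Aᵀ *ᵥ γ) k / γ k) * γ k :=
    (div_le_iff₀ (hγ k)).1 (Finset.le_sup' (fun k => (Aᵀ *ᵥ γ) k / γ k) (Finset.mem_univ k))
  calc (Aᵀ *ᵥ γ) k * δ k ≤ _ * γ k * δ k := mul_le_mul_of_nonneg_right hk (hδ k)
    _ = _ := mul_assoc _ _ _

theorem statement4_general {K n1 d : ℕ}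
    (pw pu : ℝ) (hpw : 1 < pw) (hpu : 1 < pu)
    (ρw ρu : ℝ)
    (F : PV K n1 d → PV K n1 d) (F' : PV K n1 d → PV K n1 d →L[ℝ] PV K n1 d)
    (hdF : ∀ z ∈ Bpp K n1 d pw pu ρw ρu,
      HasFDerivWithinAt F (F' z) (Bpp K n1 d pw pu ρw ρu) z)
    (hFpos : ∀ z ∈ Bpp K n1 d pw pu ρw ρu,
      (∀ i j, 0 < (F z).1 i j) ∧ (∀ a b, 0 < (F z).2 a b))
    (A : Matrix (Fin (K + 1)) (Fin (K + 1)) ℝ) (hA : ∀ i j, 0 ≤ A i j)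
    (hb1 : ∀ z ∈ Bpp K n1 d pw pu ρw ρu, ∀ (i k : Fin K) (j : Fin n1),
      ∑ s, z.1 k s * |(F' z (eW k s)).1 i j| ≤ A i.castSucc k.castSucc * (F z).1 i j)
    (hb2 : ∀ z ∈ Bpp K n1 d pw pu ρw ρu, ∀ (i : Fin K) (j : Fin n1),
      ∑ a, ∑ b, z.2 a b * |(F' z (eU a b)).1 i j| ≤ A i.castSucc (Fin.last K) * (F z).1 i j)
    (hb3 : ∀ z ∈ Bpp K n1 d pw pu ρw ρu, ∀ (k : Fin K) (a : Fin n1) (b : Fin d),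
      ∑ s, z.1 k s * |(F' z (eW k s)).2 a b| ≤ A (Fin.last K) k.castSucc * (F z).2 a b)
    (hb4 : ∀ z ∈ Bpp K n1 d pw pu ρw ρu, ∀ (a : Fin n1) (b : Fin d),
      ∑ s, ∑ t, z.2 s t * |(F' z (eU s t)).2 a b| ≤
        A (Fin.last K) (Fin.last K) * (F z).2 a b)
    (γ : Fin (K + 1) → ℝ) (hγ : ∀ k, 0 < γ k) :
    ∀ z ∈ Bpp K n1 d pw pu ρw ρu, ∀ z' ∈ Bpp K n1 d pw pu ρw ρu,
      thomW γ (F z) (F z') ≤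
        (Finset.univ.sup' (Finset.univ_nonempty_iff.mpr ⟨Fin.last K⟩)
          fun k => A.transpose.mulVec γ k / γ k) * thomW γ z z' := by
  intro z hz z' hz'
  have hpath : Set.MapsTo (geomPath z z') (Set.Icc 0 1) (Bpp K n1 d pw pu ρw ρu) :=
    fun t ht => geomPath_mem_Bpp (by linarith) (by linarith) hz hz' ht
  have hδ := blockDist_nonneg z z'
  have hrows : blockDist (F z) (F z') ≤ A *ᵥ blockDist z z' :=
    blockDist_le_of_abs_log_sub_le (fun r => dotProduct_nonneg_of_nonneg (hA r) hδ)
      (fun i j => abs_log_apply_sub_le ⟨hz.1, hz.2.1⟩ ⟨hz'.1, hz'.2.1⟩ hpath hdF (coordW i j)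
        (A i.castSucc) (fun y hy => (hFpos y hy).1 i j) (fun y hy k => hb1 y hy i k j)
        (fun y hy => hb2 y hy i j))
      (fun a b => abs_log_apply_sub_le ⟨hz.1, hz.2.1⟩ ⟨hz'.1, hz'.2.1⟩ hpath hdF (coordU a b)
        (A (Fin.last K)) (fun y hy => (hFpos y hy).2 a b) (fun y hy k => hb3 y hy k a b)
        (fun y hy => hb4 y hy a b))
  rw [thomW_eq_dotProduct_blockDist, thomW_eq_dotProduct_blockDist]
  exact (dotProduct_le_dotProduct_of_nonneg_left hrows fun k => (hγ k).le).trans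
    (dotProduct_mulVec_le_sup_mul _ A hγ hδ)

/-- Lipschitz estimate for a map `F : B₊₊ → V₊₊` in the weighted Thompson
metric: the constant is `U = max_k (Aᵀγ)_k/γ_k`. -/
theorem statement4 {K n1 d : ℕ}
    (pw pu : ℝ) (hpw : 1 < pw) (hpu : 1 < pu)
    (ρw ρu : ℝ) (hρw : 0 < ρw) (hρu : 0 < ρu)
    (F : PV K n1 d → PV K n1 d) (F' : PV K n1 d → PV K n1 d →L[ℝ] PV K n1 d)
    (hdF : ∀ z ∈ Bpp K n1 d pw pu ρw ρu,
      HasFDerivWithinAt F (F' z) (Bpp K n1 d pw pu ρw ρu) z)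
    (hF'c : ContinuousOn F' (Bpp K n1 d pw pu ρw ρu))
    (hFpos : ∀ z ∈ Bpp K n1 d pw pu ρw ρu,
      (∀ i j, 0 < (F z).1 i j) ∧ (∀ a b, 0 < (F z).2 a b))
    (A : Matrix (Fin (K + 1)) (Fin (K + 1)) ℝ) (hA : ∀ i j, 0 ≤ A i j)
    (hb1 : ∀ z ∈ Bpp K n1 d pw pu ρw ρu, ∀ (i k : Fin K) (j : Fin n1),
      ∑ s, z.1 k s * |(F' z (eW k s)).1 i j| ≤ A i.castSucc k.castSucc * (F z).1 i j)
    (hb2 : ∀ z ∈ Bpp K n1 d pw pu ρw ρu, ∀ (i : Fin K) (j : Fin n1),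
      ∑ a, ∑ b, z.2 a b * |(F' z (eU a b)).1 i j| ≤ A i.castSucc (Fin.last K) * (F z).1 i j)
    (hb3 : ∀ z ∈ Bpp K n1 d pw pu ρw ρu, ∀ (k : Fin K) (a : Fin n1) (b : Fin d),
      ∑ s, z.1 k s * |(F' z (eW k s)).2 a b| ≤ A (Fin.last K) k.castSucc * (F z).2 a b)
    (hb4 : ∀ z ∈ Bpp K n1 d pw pu ρw ρu, ∀ (a : Fin n1) (b : Fin d),
      ∑ s, ∑ t, z.2 s t * |(F' z (eU s t)).2 a b| ≤
        A (Fin.last K) (Fin.last K) * (F z).2 a b)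
    (γ : Fin (K + 1) → ℝ) (hγ : ∀ k, 0 < γ k) :
    ∀ z ∈ Bpp K n1 d pw pu ρw ρu, ∀ z' ∈ Bpp K n1 d pw pu ρw ρu,
      thomW γ (F z) (F z') ≤
        (Finset.univ.sup' (Finset.univ_nonempty_iff.mpr ⟨Fin.last K⟩)
          fun k => A.transpose.mulVec γ k / γ k) * thomW γ z z' :=
  statement4_general pw pu hpw hpu ρw ρu F F' hdF hFpos A hA hb1 hb2 hb3 hb4 γ hγ
end

section
/- Let K ∈ ℕ, p_w, p_u ∈ (1,∞), ξ₁, ξ₂ > 0 and ‖α‖_∞ ≥ 1, and let A ∈ ℝ^{(K+1)×(K+1)}_{++} be the matrix with A_{l,m} = 4(p_w'−1)ξ₁ for l,m ∈ [K], A_{l,K+1} = 2(p_w'−1)(2ξ₂ + ‖α‖_∞) for l ∈ [K], A_{K+1,m} = 2(p_u'−1)(2ξ₁ + 1) for m ∈ [K], and A_{K+1,K+1} = 2(p_u'−1)(2ξ₂ + ‖α‖_∞ − 1). If p_w > 4(K+1)ξ₁ + 3 and p_u > 2(K+1)(‖α‖_∞ + 2ξ₂) − 1, then the spectral radius of A satisfies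 ρ(A) < 1. -/
/-! Collatz–Wielandt bound: if positive weights `v` satisfy `∑ᵢ vᵢ |Aᵢⱼ| ≤ c vⱼ` for every
column `j`, then `A` multiplies the weighted `ℓ¹` norm `∑ᵢ vᵢ |xᵢ|` of any eigenvector `x` by at
most `c`, so every eigenvalue has modulus at most `c`. For `v = (p_w - 1, …, p_w - 1, p_u - 1)`
the identity `(p - 1)(p' - 1) = 1` turns the weighted column sums of `A` into
`4(K+1)ξ₁ + 2` and `2(K+1)(‖α‖_∞ + 2ξ₂) - 2`, which the hypotheses put below `p_w - 1` and
`p_u - 1`. -/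

open Finset

namespace Matrix

theorem norm_le_of_mem_spectrum_of_weighted_colSum_le {𝕜 ι : Type*} [NormedField 𝕜]
    [Fintype ι] [DecidableEq ι] {M : Matrix ι ι 𝕜} {v : ι → ℝ} (hv : ∀ i, 0 < v i) {c : ℝ}
    (hcol : ∀ j, ∑ i, v i * ‖M i j‖ ≤ c * v j) {μ : 𝕜} (hμ : μ ∈ spectrum 𝕜 M) : ‖μ‖ ≤ c := by
  rw [← spectrum_toLin', ← Module.End.hasEigenvalue_iff_mem_spectrum] at hμ
  obtain ⟨x, hx⟩ := hμ.exists_hasEigenvector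
  have hMx : M *ᵥ x = μ • x := by simpa using hx.apply_eq_smul
  obtain ⟨k, hk⟩ := Function.ne_iff.mp hx.2
  have hs : 0 < ∑ j, v j * ‖x j‖ :=
    sum_pos' (fun j _ => by have := hv j; positivity) ⟨k, mem_univ k, by simpa [hv k] using hk⟩
  refine le_of_mul_le_mul_right ?_ hs
  calc ‖μ‖ * ∑ j, v j * ‖x j‖ = ∑ i, v i * ‖(M *ᵥ x) i‖ := by
        simp only [hMx, Pi.smul_apply, smul_eq_mul, norm_mul, mul_sum]; ring_nf
    _ ≤ ∑ i, v i * ∑ j, ‖M i j‖ * ‖x j‖ := by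
        gcongr with i
        · exact (hv i).le
        · simpa only [mulVec, dotProduct, norm_mul] using norm_sum_le univ fun j => M i j * x j
    _ = ∑ j, (∑ i, v i * ‖M i j‖) * ‖x j‖ := by
        simp only [mul_sum, sum_mul]; rw [sum_comm]; ring_nf
    _ ≤ ∑ j, c * v j * ‖x j‖ := by gcongr with j; exact hcol j
    _ = c * ∑ j, v j * ‖x j‖ := by simp only [mul_sum, mul_assoc]

theorem specRad_le_of_weighted_colSum_le {m : ℕ} (A : Matrix (Fin m) (Fin m) ℝ) {v : Fin m → ℝ}
    (hv : ∀ i, 0 < v i) {c : ℝ} (hc : 0 ≤ c) (hcol : ∀ j, ∑ i, v i * |A i j| ≤ c * v j) :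
    specRad A ≤ c := by
  refine Real.sSup_le ?_ hc
  rintro r ⟨μ, hμ, rfl⟩
  exact norm_le_of_mem_spectrum_of_weighted_colSum_le hv (by simpa using hcol) hμ

theorem specRad_lt_one_of_weighted_colSum_lt {m : ℕ} (A : Matrix (Fin (m + 1)) (Fin (m + 1)) ℝ)
    {v : Fin (m + 1) → ℝ} (hv : ∀ i, 0 < v i) (hcol : ∀ j, ∑ i, v i * |A i j| < v j) :
    specRad A < 1 := by
  set c := univ.sup' univ_nonempty fun j => (∑ i, v i * |A i j|) / v j
  have hc : c < 1 := (sup'_lt_iff _).mpr fun j _ => (div_lt_one (hv j)).mpr (hcol j)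
  refine (specRad_le_of_weighted_colSum_le A hv ?_ fun j => ?_).trans_lt hc
  · exact le_sup'_of_le _ (mem_univ 0)
      (div_nonneg (sum_nonneg fun i _ => mul_nonneg (hv i).le (abs_nonneg _)) (hv 0).le)
  · exact (div_le_iff₀ (hv j)).mp (le_sup' (fun j => (∑ i, v i * |A i j|) / v j) (mem_univ j))

end Matrix

theorem hconj_sub_one {p : ℝ} (hp : p ≠ 1) : hconj p - 1 = 1 / (p - 1) := by
  have hp1 : p - 1 ≠ 0 := sub_ne_zero.mpr hp
  unfold hconj
  field_simp
  ring

theorem sub_one_mul_abs_mul_hconj_sub_one_mul {p a x : ℝ} (hp : 1 < p) (ha : 0 ≤ a)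
    (hx : 0 ≤ x) : (p - 1) * |a * (hconj p - 1) * x| = a * x := by
  have hp1 : 0 < p - 1 := sub_pos.mpr hp
  rw [hconj_sub_one hp.ne', abs_of_nonneg (by positivity)]
  field_simp

theorem statement6_general (K : ℕ) (pw pu ξ1 ξ2 nα : ℝ)
    (hξ1 : 0 < ξ1) (hξ2 : 0 < ξ2) (hnα : 1 ≤ nα)
    (A : Matrix (Fin (K + 1)) (Fin (K + 1)) ℝ)
    (hA : A = Matrix.of fun i j =>
      if i = Fin.last K then
        if j = Fin.last K then 2 * (hconj pu - 1) * (2 * ξ2 + nα - 1)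
        else 2 * (hconj pu - 1) * (2 * ξ1 + 1)
      else
        if j = Fin.last K then 2 * (hconj pw - 1) * (2 * ξ2 + nα)
        else 4 * (hconj pw - 1) * ξ1)
    (hw : pw > 4 * ((K : ℝ) + 1) * ξ1 + 3)
    (hu : pu > 2 * ((K : ℝ) + 1) * (nα + 2 * ξ2) - 1) :
    specRad A < 1 := by
  have hpw : 1 < pw := by nlinarith
  have hpu : 1 < pu := by nlinarith
  subst hA
  refine Matrix.specRad_lt_one_of_weighted_colSum_lt _
    (v := fun i => if i = Fin.last K then pu - 1 else pw - 1)
    (fun i => by split_ifs <;> linarith) fun j => ?_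
  simp only [Fin.sum_univ_castSucc, Matrix.of_apply, Fin.castSucc_ne_last, if_false, if_true]
  split_ifs
  · rw [sub_one_mul_abs_mul_hconj_sub_one_mul hpw (by norm_num) (by positivity),
      sub_one_mul_abs_mul_hconj_sub_one_mul hpu (by norm_num) (by linarith)]
    simp only [sum_const, card_univ, Fintype.card_fin, nsmul_eq_mul]
    linarith
  · rw [sub_one_mul_abs_mul_hconj_sub_one_mul hpw (by norm_num) hξ1.le,
      sub_one_mul_abs_mul_hconj_sub_one_mul hpu (by norm_num) (by positivity)]
    simp only [sum_const, card_univ, Fintype.card_fin, nsmul_eq_mul]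
    linarith

/-- Explicit lower bounds on `p_w, p_u` ensuring `ρ(A) < 1` for the matrix `A`
of the one-hidden-layer convergence theorem. -/
theorem statement6 (K : ℕ) (pw pu ξ1 ξ2 nα : ℝ)
    (hpw : 1 < pw) (hpu : 1 < pu) (hξ1 : 0 < ξ1) (hξ2 : 0 < ξ2) (hnα : 1 ≤ nα)
    (A : Matrix (Fin (K + 1)) (Fin (K + 1)) ℝ)
    (hA : A = Matrix.of fun i j =>
      if i = Fin.last K then
        if j = Fin.last K then 2 * (hconj pu - 1) * (2 * ξ2 + nα - 1)
        else 2 * (hconj pu - 1) * (2 * ξ1 + 1)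
      else
        if j = Fin.last K then 2 * (hconj pw - 1) * (2 * ξ2 + nα)
        else 4 * (hconj pw - 1) * ξ1)
    (hw : pw > 4 * ((K : ℝ) + 1) * ξ1 + 3)
    (hu : pu > 2 * ((K : ℝ) + 1) * (nα + 2 * ξ2) - 1) :
    specRad A < 1 :=
  statement6_general K pw pu ξ1 ξ2 nα hξ1 hξ2 hnα A hA hw hu
end

section
/- Let {(x^i, y_i)}_{i=1}^n ⊂ ℝ^d_+ × [K] with at least one x^i nonzero being unnecessary, ε > 0, and let Φ be the objective of the one-hidden-layer model with α_i ≥ 1 for all i ∈ [n₁]. Then the gradient ∇Φ(w,u) has strictly positive entries for every (w,u) ∈ S_+; explicitly, ∂Φ/∂w_{a,b} = (1/n) Σ_{i=1}^n ( δ_{y_i a} − e^{f_a(x^i)}/Σ_j e^{f_j(x^i)} + 1 ) (Σ_m u_{bm} x^i_m)^{α_b} + ε > 0 and ∂Φ/∂u_{ab} = (1/n) Σ_{i=1}^n Σ_{r=1}^K ( δ_{y_i r} − e^{f_r(x^i)}/Σ_j e^{f_j(x^i)} + 1 ) w_{r,a} α_a (Σ_m u_{am} x^i_m)^{α_a −1}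 x^i_b + ε > 0. -/
/-! Every exponent satisfies `α l ≥ 1`, so `t ↦ t ^ α l` is differentiable also at `0` and `Φ` is
differentiable; each partial derivative is then a line derivative, computed by the chain rule.
Differentiating `g ↦ -loss y g + ∑ r, g r` in `g r` gives `δ_{y r} - softmax_r g + 1`, which is
nonnegative since softmax entries are at most `1`. On nonnegative weights and data the
derivatives of the network are nonnegative too, and the penalty term adds `ε > 0`. -/

open Finset

noncomputable def lossWeight {K : ℕ} (y : Fin K) (g : Fin K → ℝ) (r : Fin K) : ℝ :=
  (if y = r then 1 else 0) - Real.exp (g r) / ∑ j, Real.exp (g j) + 1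

lemma sum_exp_pos {K : ℕ} (y : Fin K) (g : Fin K → ℝ) : 0 < ∑ j, Real.exp (g j) :=
  haveI : Nonempty (Fin K) := ⟨y⟩
  sum_pos (fun _ _ => Real.exp_pos _) univ_nonempty

lemma lossWeight_nonneg {K : ℕ} (y : Fin K) (g : Fin K → ℝ) (r : Fin K) :
    0 ≤ lossWeight y g r := by
  have : Real.exp (g r) / ∑ j, Real.exp (g j) ≤ 1 :=
    div_le_one_of_le₀ (single_le_sum (fun j _ => (Real.exp_pos (g j)).le) (mem_univ r))
      (sum_exp_pos y g).le
  unfold lossWeight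
  split_ifs <;> linarith

lemma hasDerivAt_neg_loss_add_sum {K : ℕ} (y : Fin K) {G : ℝ → Fin K → ℝ} {G' : Fin K → ℝ}
    {t : ℝ} (hG : ∀ r, HasDerivAt (fun s => G s r) (G' r) t) :
    HasDerivAt (fun s => -loss y (G s) + ∑ r, G s r) (∑ r, lossWeight y (G t) r * G' r) t := by
  have hexp : HasDerivAt (fun s => ∑ j, Real.exp (G s j)) (∑ j, Real.exp (G t j) * G' j) t :=
    HasDerivAt.fun_sum fun j _ => (hG j).exp
  refine ((((hG y).fun_neg.fun_add (hexp.log (sum_exp_pos y (G t)).ne')).fun_neg).fun_add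
    (HasDerivAt.fun_sum (u := univ) fun r _ => hG r)).congr_deriv ?_
  simp only [lossWeight, add_mul, sub_mul, ite_mul, one_mul, zero_mul, sum_add_distrib,
    sum_sub_distrib, sum_ite_eq, mem_univ, if_true, div_mul_eq_mul_div, ← sum_div]
  ring

lemma hasLineDerivAt_net {K n1 d : ℕ} (α : Fin n1 → ℝ) (hα : ∀ l, 1 ≤ α l) (x : Fin d → ℝ)
    (z v : PV K n1 d) (r : Fin K) :
    HasLineDerivAt ℝ (fun p : PV K n1 d => net α p.1 p.2 x r)
      (∑ l, (v.1 r l * (∑ m, z.2 l m * x m) ^ α l +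
        z.1 r l * (α l * (∑ m, z.2 l m * x m) ^ (α l - 1) * ∑ m, v.2 l m * x m))) z v := by
  unfold HasLineDerivAt net
  simp only [Prod.fst_add, Prod.snd_add, Prod.smul_fst, Prod.smul_snd, Pi.add_apply,
    Pi.smul_apply, smul_eq_mul]
  refine HasDerivAt.fun_sum fun l _ => ?_
  have hs : HasDerivAt (fun t => ∑ m, (z.2 l m + t * v.2 l m) * x m) (∑ m, v.2 l m * x m) 0 :=
    HasDerivAt.fun_sum fun m _ => ((hasDerivAt_mul_const _).const_add _).mul_const _
  have hw : HasDerivAt (fun t => z.1 r l + t * v.1 r l) (v.1 r l) 0 :=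
    (hasDerivAt_mul_const _).const_add _
  refine (hw.mul (hs.rpow_const (Or.inr (hα l)))).congr_deriv ?_
  simp only [zero_mul, add_zero]
  ring

lemma differentiableAt_Phi {K n1 d n : ℕ} (α : Fin n1 → ℝ) (hα : ∀ l, 1 ≤ α l)
    (x : Fin n → Fin d → ℝ) (y : Fin n → Fin K) (ε : ℝ) (z : PV K n1 d) :
    DifferentiableAt ℝ (Phi α x y ε) z := by
  unfold Phi loss net
  fun_prop (disch := first | exact Or.inr (hα _) | exact (sum_exp_pos (y ‹Fin n›) _).ne')

lemma hasLineDerivAt_Phi {K n1 d n : ℕ} (α : Fin n1 → ℝ) (x : Fin n → Fin d → ℝ)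
    (y : Fin n → Fin K) (ε : ℝ) (z v : PV K n1 d) (D : Fin n → Fin K → ℝ)
    (hD : ∀ i r, HasLineDerivAt ℝ (fun p : PV K n1 d => net α p.1 p.2 (x i) r) (D i r) z v) :
    HasLineDerivAt ℝ (Phi α x y ε)
      ((1 / (n : ℝ)) * ∑ i, ∑ r, lossWeight (y i) (net α z.1 z.2 (x i)) r * D i r
        + ε * ((∑ r, ∑ l, v.1 r l) + ∑ l, ∑ m, v.2 l m)) z v := by
  have hline : ∀ c e : ℝ, HasDerivAt (fun t => c + t * e) e 0 := fun c e =>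
    (hasDerivAt_mul_const e).const_add c
  have hsum : HasDerivAt
      (fun t : ℝ => (∑ r, ∑ l, (z + t • v).1 r l) + ∑ l, ∑ m, (z + t • v).2 l m)
      ((∑ r, ∑ l, v.1 r l) + ∑ l, ∑ m, v.2 l m) 0 := by
    simp only [Prod.fst_add, Prod.snd_add, Prod.smul_fst, Prod.smul_snd, Pi.add_apply,
      Pi.smul_apply, smul_eq_mul]
    exact (HasDerivAt.fun_sum fun r _ => HasDerivAt.fun_sum fun l _ => hline _ _).add
      (HasDerivAt.fun_sum fun l _ => HasDerivAt.fun_sum fun m _ => hline _ _)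
  have hloss := fun i => hasDerivAt_neg_loss_add_sum (y i) (hD i)
  simp only [zero_smul, add_zero] at hloss
  exact ((HasDerivAt.fun_sum fun i _ => hloss i).const_mul _).add (hsum.const_mul ε)

lemma fderiv_Phi_apply {K n1 d n : ℕ} (α : Fin n1 → ℝ) (hα : ∀ l, 1 ≤ α l)
    (x : Fin n → Fin d → ℝ) (y : Fin n → Fin K) (ε : ℝ) (z v : PV K n1 d) :
    fderiv ℝ (Phi α x y ε) z v =
      (1 / (n : ℝ)) * ∑ i, ∑ r, lossWeight (y i) (net α z.1 z.2 (x i)) r *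
          ∑ l, (v.1 r l * (∑ m, z.2 l m * x i m) ^ α l +
            z.1 r l * (α l * (∑ m, z.2 l m * x i m) ^ (α l - 1) * ∑ m, v.2 l m * x i m))
        + ε * ((∑ r, ∑ l, v.1 r l) + ∑ l, ∑ m, v.2 l m) := by
  rw [← (differentiableAt_Phi α hα x y ε z).lineDeriv_eq_fderiv]
  exact (hasLineDerivAt_Phi α x y ε z v _ fun i r => hasLineDerivAt_net α hα (x i) z v r).lineDeriv

lemma gradW_Phi {K n1 d n : ℕ} (α : Fin n1 → ℝ) (hα : ∀ l, 1 ≤ α l)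
    (x : Fin n → Fin d → ℝ) (y : Fin n → Fin K) (ε : ℝ) (z : PV K n1 d) (a : Fin K) (b : Fin n1) :
    gradW (Phi α x y ε) z a b =
      (1 / (n : ℝ)) * (∑ i, lossWeight (y i) (net α z.1 z.2 (x i)) a *
        (∑ m, z.2 b m * x i m) ^ α b) + ε := by
  simp [gradW, fderiv_Phi_apply α hα, eW, ite_and]

lemma gradU_Phi {K n1 d n : ℕ} (α : Fin n1 → ℝ) (hα : ∀ l, 1 ≤ α l)
    (x : Fin n → Fin d → ℝ) (y : Fin n → Fin K) (ε : ℝ) (z : PV K n1 d) (a : Fin n1) (b : Fin d) :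
    gradU (Phi α x y ε) z a b =
      (1 / (n : ℝ)) * (∑ i, ∑ r, lossWeight (y i) (net α z.1 z.2 (x i)) r *
        (z.1 r a * α a * (∑ m, z.2 a m * x i m) ^ (α a - 1) * x i b)) + ε := by
  simp [gradU, fderiv_Phi_apply α hα, eU, ite_and, mul_assoc]

lemma gradW_Phi_pos {K n1 d n : ℕ} (α : Fin n1 → ℝ) (hα : ∀ l, 1 ≤ α l)
    (x : Fin n → Fin d → ℝ) (hx : ∀ i m, 0 ≤ x i m) (y : Fin n → Fin K) {ε : ℝ} (hε : 0 < ε)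
    {z : PV K n1 d} (hu : ∀ l m, 0 ≤ z.2 l m) (a : Fin K) (b : Fin n1) :
    0 < gradW (Phi α x y ε) z a b := by
  rw [gradW_Phi α hα]
  refine add_pos_of_nonneg_of_pos (mul_nonneg (by positivity) (sum_nonneg fun i _ => ?_)) hε
  exact mul_nonneg (lossWeight_nonneg _ _ _)
    (Real.rpow_nonneg (sum_nonneg fun m _ => mul_nonneg (hu b m) (hx i m)) _)

lemma gradU_Phi_pos {K n1 d n : ℕ} (α : Fin n1 → ℝ) (hα : ∀ l, 1 ≤ α l)
    (x : Fin n → Fin d → ℝ) (hx : ∀ i m, 0 ≤ x i m) (y : Fin n → Fin K) {ε : ℝ} (hε : 0 < ε)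
    {z : PV K n1 d} (hw : ∀ r l, 0 ≤ z.1 r l) (hu : ∀ l m, 0 ≤ z.2 l m) (a : Fin n1) (b : Fin d) :
    0 < gradU (Phi α x y ε) z a b := by
  rw [gradU_Phi α hα]
  refine add_pos_of_nonneg_of_pos
    (mul_nonneg (by positivity) (sum_nonneg fun i _ => sum_nonneg fun r _ => ?_)) hε
  have hS : 0 ≤ ∑ m, z.2 a m * x i m := sum_nonneg fun m _ => mul_nonneg (hu a m) (hx i m)
  have hαa : 0 ≤ α a := zero_le_one.trans (hα a)
  exact mul_nonneg (lossWeight_nonneg _ _ _)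
    (mul_nonneg (mul_nonneg (mul_nonneg (hw r a) hαa) (Real.rpow_nonneg hS _)) (hx i b))

theorem statement7_general {K n1 d n : ℕ}
    (x : Fin n → Fin d → ℝ) (y : Fin n → Fin K) (hx : ∀ i m, 0 ≤ x i m)
    (pw pu : ℝ)
    (ρw ρu : ℝ)
    (ε : ℝ) (hε : 0 < ε)
    (α : Fin n1 → ℝ) (hα : ∀ l, 1 ≤ α l) :
    ∀ z ∈ Splus K n1 d pw pu ρw ρu,
      (∀ (a : Fin K) (b : Fin n1),
        gradW (Phi α x y ε) z a b =
          (1 / (n : ℝ)) * (∑ i, ((if y i = a then 1 else 0) -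
              Real.exp (net α z.1 z.2 (x i) a) / (∑ j, Real.exp (net α z.1 z.2 (x i) j)) + 1) *
            (∑ m, z.2 b m * x i m) ^ α b) + ε ∧
        0 < gradW (Phi α x y ε) z a b) ∧
      (∀ (a : Fin n1) (b : Fin d),
        gradU (Phi α x y ε) z a b =
          (1 / (n : ℝ)) * (∑ i, ∑ r, ((if y i = r then 1 else 0) -
              Real.exp (net α z.1 z.2 (x i) r) / (∑ j, Real.exp (net α z.1 z.2 (x i) j)) + 1) *
            (z.1 r a * α a * (∑ m, z.2 a m * x i m) ^ (α a - 1) * x i b)) + ε ∧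
        0 < gradU (Phi α x y ε) z a b) := by
  rintro z ⟨hw, hu, -, -⟩
  exact ⟨fun a b => ⟨gradW_Phi α hα x y ε z a b, gradW_Phi_pos α hα x hx y hε hu a b⟩,
    fun a b => ⟨gradU_Phi α hα x y ε z a b, gradU_Phi_pos α hα x hx y hε hw hu a b⟩⟩

/-- The gradient of the one-hidden-layer objective is given by the explicit
formulas and is strictly positive everywhere on `S₊`. -/
theorem statement7 {K n1 d n : ℕ}
    (x : Fin n → Fin d → ℝ) (y : Fin n → Fin K) (hx : ∀ i m, 0 ≤ x i m)
    (pw pu : ℝ) (hpw : 1 < pw) (hpu : 1 < pu)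
    (ρw ρu : ℝ) (hρw : 0 < ρw) (hρu : 0 < ρu)
    (ε : ℝ) (hε : 0 < ε)
    (α : Fin n1 → ℝ) (hα : ∀ l, 1 ≤ α l) :
    ∀ z ∈ Splus K n1 d pw pu ρw ρu,
      (∀ (a : Fin K) (b : Fin n1),
        gradW (Phi α x y ε) z a b =
          (1 / (n : ℝ)) * (∑ i, ((if y i = a then 1 else 0) -
              Real.exp (net α z.1 z.2 (x i) a) / (∑ j, Real.exp (net α z.1 z.2 (x i) j)) + 1) *
            (∑ m, z.2 b m * x i m) ^ α b) + ε ∧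
        0 < gradW (Phi α x y ε) z a b) ∧
      (∀ (a : Fin n1) (b : Fin d),
        gradU (Phi α x y ε) z a b =
          (1 / (n : ℝ)) * (∑ i, ∑ r, ((if y i = r then 1 else 0) -
              Real.exp (net α z.1 z.2 (x i) r) / (∑ j, Real.exp (net α z.1 z.2 (x i) j)) + 1) *
            (z.1 r a * α a * (∑ m, z.2 a m * x i m) ^ (α a - 1) * x i b)) + ε ∧
        0 < gradU (Phi α x y ε) z a b) :=
  statement7_general x y hx pw pu ρw ρu ε hε α hα
end

section
/- Let K ∈ ℕ, f ∈ ℝ^K, y ∈ [K], and let p_r = e^{f_r} / Σ_{j=1}^K e^{f_j} denote the softmax probabilities. Then for all nonnegative vectors a, b ∈ ℝ^K_+ it holds Σ_{q,r=1}^K | δ_{qr} p_r − p_r p_q | a_r b_q ≤ 2 (max_{l∈[K]} b_l) Σ_{r=1}^K (1 − p_r + δ_{y r}) a_r, where δ is the Kronecker delta. -/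
/-- Bound on the (weighted) negative Hessian of the cross-entropy loss in
terms of softmax probabilities. -/
theorem statement17 {K : ℕ} (f : Fin K → ℝ) (y : Fin K) (a b : Fin K → ℝ)
    (ha : ∀ r, 0 ≤ a r) (hb : ∀ q, 0 ≤ b q)
    (p : Fin K → ℝ) (hp : ∀ r, p r = Real.exp (f r) / ∑ j, Real.exp (f j)) :
    ∑ q, ∑ r, |(if q = r then 1 else 0) * p r - p r * p q| * a r * b q ≤
      2 * (Finset.univ.sup' (Finset.univ_nonempty_iff.mpr ⟨y⟩) fun l => b l) *
        ∑ r, (1 - p r + if y = r then 1 else 0) * a r := by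
  have hne : (Finset.univ : Finset (Fin K)).Nonempty := ⟨y, Finset.mem_univ y⟩
  have hS : 0 < ∑ j, Real.exp (f j) :=
    Finset.sum_pos (fun j _ => Real.exp_pos _) hne
  have hp0 : ∀ r, 0 ≤ p r := fun r => by
    rw [hp r]; positivity
  have hsum : ∑ r, p r = 1 := by
    simp only [hp]
    rw [← Finset.sum_div, div_self hS.ne']
  have hp1 : ∀ r, p r ≤ 1 := fun r => by
    rw [← hsum]
    exact Finset.single_le_sum (fun i _ => hp0 i) (Finset.mem_univ r)
  set B := (Finset.univ.sup' (Finset.univ_nonempty_iff.mpr ⟨y⟩) fun l => b l) with hBdef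
  have hB : ∀ q, b q ≤ B := fun q => Finset.le_sup' _ (Finset.mem_univ q)
  have hB0 : 0 ≤ B := le_trans (hb y) (hB y)
  rw [Finset.sum_comm]
  have key : ∀ r, ∑ q, |(if q = r then 1 else 0) * p r - p r * p q| * a r * b q
      ≤ 2 * B * ((1 - p r + if y = r then 1 else 0) * a r) := by
    intro r
    have step1 : ∑ q, |(if q = r then 1 else 0) * p r - p r * p q| * a r * b q
        ≤ ∑ q, (p r * (if q = r then (1 - p r) else p q)) * a r * B := by
      apply Finset.sum_le_sum
      intro q _
      by_cases hqr : q = r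
      · subst hqr
        simp only [if_pos rfl, if_true, one_mul]
        have habs : |p q - p q * p q| = p q * (1 - p q) := by
          rw [abs_of_nonneg]; ring
          nlinarith [hp0 q, hp1 q]
        rw [habs]
        exact mul_le_mul (le_refl _) (hB q) (hb q)
          (mul_nonneg (mul_nonneg (hp0 q) (sub_nonneg.mpr (hp1 q))) (ha q))
      · simp only [if_neg hqr, zero_mul, zero_sub, abs_neg,
          abs_of_nonneg (mul_nonneg (hp0 r) (hp0 q))]
        exact mul_le_mul (le_refl _) (hB q) (hb q)
          (mul_nonneg (mul_nonneg (hp0 r) (hp0 q)) (ha r))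
    have step2 : ∑ q, (p r * (if q = r then (1 - p r) else p q)) * a r * B
        = p r * a r * B * (∑ q, if q = r then (1 - p r) else p q) := by
      rw [Finset.mul_sum]
      apply Finset.sum_congr rfl
      intro q _
      ring
    have step3 : (∑ q, if q = r then (1 - p r) else p q) = 2 * (1 - p r) := by
      have : ∀ q, (if q = r then (1 - p r) else p q)
          = p q + (if q = r then (1 - 2 * p r) else 0) := by
        intro q
        by_cases hqr : q = r
        · simp [hqr]; ring
        · simp [hqr]
      simp only [this, Finset.sum_add_distrib, hsum, Finset.sum_ite_eq' Finset.univ r,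
        Finset.mem_univ, if_pos]
      ring
    calc ∑ q, |(if q = r then 1 else 0) * p r - p r * p q| * a r * b q
        ≤ p r * a r * B * (2 * (1 - p r)) := by rw [← step3, ← step2]; exact step1
      _ ≤ 2 * B * ((1 - p r + if y = r then 1 else 0) * a r) := by
          have hδ : (0:ℝ) ≤ if y = r then 1 else 0 := by positivity
          nlinarith [hp0 r, hp1 r, ha r, mul_nonneg (ha r) hB0,
            mul_nonneg (mul_nonneg (ha r) hB0) (sub_nonneg.mpr (hp1 r))]
  calc ∑ r, ∑ q, |(if q = r then 1 else 0) * p r - p r * p q| * a r * b q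
      ≤ ∑ r, 2 * B * ((1 - p r + if y = r then 1 else 0) * a r) :=
        Finset.sum_le_sum fun r _ => key r
    _ = 2 * B * ∑ r, (1 - p r + if y = r then 1 else 0) * a r := by
        rw [Finset.mul_sum]
end
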